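/- In a commutative idempotent involutive residuated lattice, the family of intervals {B_x | x ∈ A} partitions the underlying set: every x belongs to B_x, and if y ∈ B_x then B_y = B_x. -/

import Mathlib

/-- A commutative idempotent involutive residuated lattice. -/
class CIdInRL (α : Type*) extends Lattice α, CommMonoid α, Zero α where
  arrow : α → α → α
  residuation : ∀ x y z : α, x * y ≤ z ↔ y ≤ arrow x z
  idem : ∀ x : α, x * x = x
  involutive : ∀ x : α, arrow (arrow x 0) 0 = x

namespace CIdInRL
variable {α : Type*} [CIdInRL α]
/-- linear negation ¬x := x → 0 -/
def neg (x : α) : α := arrow x 0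
/-- 0_x := x ∧ ¬x -/
def zx (x : α) : α := x ⊓ neg x
/-- 1_x := x ∨ ¬x -/
def ox (x : α) : α := x ⊔ neg x
/-- monoidal order x ⊑ y iff x·y = x -/
def mleq (x y : α) : Prop := x * y = x
end CIdInRL

/-!
Negation is an order-reversing involution with `¬0_x = 1_x`, so `B_y = B_x` as soon as
`0_y = 0_x`. In an idempotent involutive residuated lattice `0_x = x·¬x ≤ 0`, and
`a ≤ b ↔ a·¬b ≤ 0`. For `y ∈ B_x`, the equation `0_x·y = 0_x` then gives
`0_x ≤ y ⊓ ¬y = 0_y`, while `y·1_x = y` gives `y·x ≤ y` and `y·¬x ≤ y`, which say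
exactly that `0_y = y·¬y` lies below `¬x` and `x`.
-/

namespace CIdInRL

variable {α : Type*} [CIdInRL α]

instance : IsOrderedMonoid α where
  mul_le_mul_left a b hab c := by
    rw [mul_comm a, mul_comm b]
    exact (residuation c a (c * b)).mpr (hab.trans ((residuation c b (c * b)).mp le_rfl))

theorem le_neg_iff_mul_le_zero {a b : α} : a ≤ neg b ↔ b * a ≤ 0 :=
  (residuation b a 0).symm

theorem mul_neg_le_zero (x : α) : x * neg x ≤ 0 :=
  le_neg_iff_mul_le_zero.mp le_rfl

protected theorem neg_neg (x : α) : neg (neg x) = x :=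
  involutive x

theorem le_iff_mul_neg_le_zero {a b : α} : a ≤ b ↔ a * neg b ≤ 0 := by
  conv_lhs => rw [← CIdInRL.neg_neg b]
  rw [le_neg_iff_mul_le_zero, mul_comm]

protected theorem mul_sup (x a b : α) : x * (a ⊔ b) = x * a ⊔ x * b := by
  refine le_antisymm ((residuation _ _ _).mpr (sup_le ?_ ?_))
    (sup_le (mul_le_mul_right le_sup_left x) (mul_le_mul_right le_sup_right x))
  · exact (residuation _ _ _).mp le_sup_left
  · exact (residuation _ _ _).mp le_sup_right

protected theorem neg_sup (a b : α) : neg (a ⊔ b) = neg a ⊓ neg b :=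
  eq_of_forall_le_iff fun c => by
    simp only [le_inf_iff, le_neg_iff_mul_le_zero, CIdInRL.mul_sup, sup_le_iff, mul_comm _ c]

protected theorem neg_inf (a b : α) : neg (a ⊓ b) = neg a ⊔ neg b := by
  rw [← CIdInRL.neg_neg (neg a ⊔ neg b), CIdInRL.neg_sup, CIdInRL.neg_neg, CIdInRL.neg_neg]

theorem neg_zx (x : α) : neg (zx x) = ox x := by
  rw [zx, CIdInRL.neg_inf, CIdInRL.neg_neg, ox, sup_comm]

theorem mul_neg_self_eq_zx (x : α) : x * neg x = zx x := by
  refine le_antisymm (le_inf ?_ ?_) ?_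
  · rw [le_iff_mul_neg_le_zero, mul_assoc, idem]
    exact mul_neg_le_zero x
  · rw [le_neg_iff_mul_le_zero, ← mul_assoc, idem]
    exact mul_neg_le_zero x
  · calc zx x = zx x * zx x := (idem _).symm
      _ ≤ x * neg x := mul_le_mul' inf_le_left inf_le_right

theorem zx_le_zero (x : α) : zx x ≤ 0 :=
  mul_neg_self_eq_zx x ▸ mul_neg_le_zero x

theorem zx_mleq_self (x : α) : mleq (zx x) x := by
  rw [mleq, ← mul_neg_self_eq_zx, mul_right_comm, idem]

theorem mleq_ox_self (x : α) : mleq x (ox x) := by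
  rw [mleq, ox, CIdInRL.mul_sup, idem, mul_neg_self_eq_zx, sup_eq_left]
  exact inf_le_left

theorem mul_neg_self_le_iff (y c : α) : y * neg y ≤ c ↔ y * neg c ≤ y := by
  rw [le_iff_mul_neg_le_zero, le_iff_mul_neg_le_zero (a := y * neg c), mul_right_comm]

theorem le_zx_of_mleq {a b : α} (hab : mleq a b) (ha : a ≤ 0) : a ≤ zx b := by
  have hab : a * b = a := hab
  refine le_inf ?_ (le_neg_iff_mul_le_zero.mpr (by rwa [mul_comm, hab]))
  rw [le_iff_mul_neg_le_zero]
  calc a * neg b = a * (b * neg b) := by rw [← mul_assoc, hab]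
    _ ≤ 0 * 0 := mul_le_mul' ha (mul_neg_le_zero b)
    _ = 0 := idem 0

theorem zx_le_of_mleq_ox {x y : α} (h : mleq y (ox x)) : zx y ≤ zx x := by
  have hle {c : α} (hc : c ≤ ox x) : y * c ≤ y := (mul_le_mul_right hc y).trans_eq h
  rw [← mul_neg_self_eq_zx y]
  refine le_inf ((mul_neg_self_le_iff y x).mpr (hle le_sup_right)) ?_
  rw [mul_neg_self_le_iff, CIdInRL.neg_neg]
  exact hle le_sup_left

theorem zx_eq_of_mleq {x y : α} (h₀ : mleq (zx x) y) (h₁ : mleq y (ox x)) : zx y = zx x :=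
  le_antisymm (zx_le_of_mleq_ox h₁) (le_zx_of_mleq h₀ (zx_le_zero x))

theorem ox_eq_of_mleq {x y : α} (h₀ : mleq (zx x) y) (h₁ : mleq y (ox x)) : ox y = ox x := by
  rw [← neg_zx, ← neg_zx x, zx_eq_of_mleq h₀ h₁]

end CIdInRL

open CIdInRL in
theorem stmt7 {α : Type*} [CIdInRL α] (x : α) :
    (mleq (zx x) x ∧ mleq x (ox x)) ∧
    ∀ y : α, (mleq (zx x) y ∧ mleq y (ox x)) →
      ∀ z : α, ((mleq (zx y) z ∧ mleq z (ox y)) ↔ (mleq (zx x) z ∧ mleq z (ox x))) := by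
  refine ⟨⟨zx_mleq_self x, mleq_ox_self x⟩, ?_⟩
  rintro y ⟨h₀, h₁⟩ z
  rw [zx_eq_of_mleq h₀ h₁, ox_eq_of_mleq h₀ h₁]
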